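/- Let M1 = [[0,0],[0,1]], M2 = [[3/4, −√3/4],[−√3/4, 1/4]], M3 = [[3/4, √3/4],[√3/4, 1/4]] (i.e. Mi = vi⊗vi for v1 = (0,1), v2 = (√3/2,−1/2), v3 = (−√3/2,−1/2)), and let Q be a real 2×2 orthogonal matrix. Then conjugation by Q permutes the set {M1, M2, M3}, i.e. {Q M1 Qᵀ, Q M2 Qᵀ, Q M3 Qᵀ} = {M1, M2, M3}, if and only if Q belongs to the subgroup of O(2) generated by the rotation R_{π/3} = [[1/2, −√3/2],[√3/2, 1/2]] and the reflection [[−1,0],[0,1]] (the dihedral group of order 12). In other words, the structural tensor set {M1, M2, M3} characterizes the 2D point group C6v. -/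
import Mathlib


open Matrix

/-- `M1 = v1 ⊗ v1 = [[0,0],[0,1]]` for `v1 = (0,1)`. -/
noncomputable def M1 : Matrix (Fin 2) (Fin 2) ℝ := !![0, 0; 0, 1]

/-- `M2 = v2 ⊗ v2 = [[3/4, -√3/4],[-√3/4, 1/4]]` for `v2 = (√3/2, -1/2)`. -/
noncomputable def M2 : Matrix (Fin 2) (Fin 2) ℝ :=
  !![3 / 4, -(Real.sqrt 3 / 4); -(Real.sqrt 3 / 4), 1 / 4]

/-- `M3 = v3 ⊗ v3 = [[3/4, √3/4],[√3/4, 1/4]]` for `v3 = (-√3/2, -1/2)`. -/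
noncomputable def M3 : Matrix (Fin 2) (Fin 2) ℝ :=
  !![3 / 4, Real.sqrt 3 / 4; Real.sqrt 3 / 4, 1 / 4]

/-- The rotation `R_{π/3} = [[1/2, -√3/2],[√3/2, 1/2]]` as an element of `O(2)`. -/
noncomputable def rotPiOver3 : Matrix.orthogonalGroup (Fin 2) ℝ :=
  ⟨!![1 / 2, -(Real.sqrt 3 / 2); Real.sqrt 3 / 2, 1 / 2], by
    have h3 : Real.sqrt 3 * Real.sqrt 3 = 3 := Real.mul_self_sqrt (by norm_num)
    rw [Matrix.mem_orthogonalGroup_iff]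
    ext i j
    fin_cases i <;> fin_cases j <;>
      simp [Matrix.mul_apply, Fin.sum_univ_two, Matrix.one_apply] <;> nlinarith [h3]⟩

/-- The reflection `[[-1,0],[0,1]]` (about the y-axis) as an element of `O(2)`. -/
noncomputable def reflY : Matrix.orthogonalGroup (Fin 2) ℝ :=
  ⟨!![-1, 0; 0, 1], by
    rw [Matrix.mem_orthogonalGroup_iff]
    ext i j
    fin_cases i <;> fin_cases j <;>
      simp [Matrix.mul_apply, Fin.sum_univ_two, Matrix.one_apply]⟩

/-- The point group `C6v`: the subgroup of `O(2)` generated by the rotation `R_{π/3}`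
and the reflection `[[-1,0],[0,1]]` (the dihedral group of order 12). -/
noncomputable def C6v : Subgroup (Matrix.orthogonalGroup (Fin 2) ℝ) :=
  Subgroup.closure {rotPiOver3, reflY}


set_option maxHeartbeats 1000000

section Aux

local notation "√3" => Real.sqrt 3

private lemma sqrt3_sq : √3 * √3 = 3 := Real.mul_self_sqrt (by norm_num)

private lemma sqrt3_ne : √3 ≠ 0 := by positivity

private lemma sqrt3_cube : √3 * √3 * √3 = 3 * √3 := by rw [sqrt3_sq]

private lemma transpose_fin_two' (a b c d : ℝ) : (!![a, b; c, d])ᵀ = !![a, c; b, d] := by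
  ext i j; fin_cases i <;> fin_cases j <;> rfl

/-- Conjugation map. -/
private def cj (P M : Matrix (Fin 2) (Fin 2) ℝ) : Matrix (Fin 2) (Fin 2) ℝ := P * M * Pᵀ

private lemma cj_comp (P Q : Matrix (Fin 2) (Fin 2) ℝ) :
    cj (P * Q) = cj P ∘ cj Q := by
  funext M
  simp [cj, Matrix.transpose_mul, Matrix.mul_assoc]

private lemma cj_one : cj (1 : Matrix (Fin 2) (Fin 2) ℝ) = id := by
  funext M; simp [cj]

private lemma cj_image (P : Matrix (Fin 2) (Fin 2) ℝ) :
    cj P '' {M1, M2, M3} = {P * M1 * Pᵀ, P * M2 * Pᵀ, P * M3 * Pᵀ} := by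
  simp [cj, Set.image_insert_eq]

private lemma conj_rot :
    cj (rotPiOver3 : Matrix (Fin 2) (Fin 2) ℝ) '' {M1, M2, M3} = {M1, M2, M3} := by
  have h1 : (rotPiOver3 : Matrix (Fin 2) (Fin 2) ℝ) * M1 * (rotPiOver3 : Matrix (Fin 2) (Fin 2) ℝ)ᵀ = M2 := by
    show !![1 / 2, -(√3 / 2); √3 / 2, 1 / 2] * M1 * (!![1 / 2, -(√3 / 2); √3 / 2, 1 / 2])ᵀ = M2
    rw [transpose_fin_two', M1, M2, Matrix.mul_fin_two, Matrix.mul_fin_two]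
    ext i j
    fin_cases i <;> fin_cases j <;> simp <;> linarith [sqrt3_sq, sqrt3_cube]
  have h2 : (rotPiOver3 : Matrix (Fin 2) (Fin 2) ℝ) * M2 * (rotPiOver3 : Matrix (Fin 2) (Fin 2) ℝ)ᵀ = M3 := by
    show !![1 / 2, -(√3 / 2); √3 / 2, 1 / 2] * M2 * (!![1 / 2, -(√3 / 2); √3 / 2, 1 / 2])ᵀ = M3
    rw [transpose_fin_two', M2, M3, Matrix.mul_fin_two, Matrix.mul_fin_two]
    ext i j
    fin_cases i <;> fin_cases j <;> simp <;> linarith [sqrt3_sq, sqrt3_cube]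
  have h3 : (rotPiOver3 : Matrix (Fin 2) (Fin 2) ℝ) * M3 * (rotPiOver3 : Matrix (Fin 2) (Fin 2) ℝ)ᵀ = M1 := by
    show !![1 / 2, -(√3 / 2); √3 / 2, 1 / 2] * M3 * (!![1 / 2, -(√3 / 2); √3 / 2, 1 / 2])ᵀ = M1
    rw [transpose_fin_two', M1, M3, Matrix.mul_fin_two, Matrix.mul_fin_two]
    ext i j
    fin_cases i <;> fin_cases j <;> simp <;> linarith [sqrt3_sq, sqrt3_cube]
  rw [cj_image, h1, h2, h3]
  ext x
  simp only [Set.mem_insert_iff, Set.mem_singleton_iff]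
  tauto

private lemma conj_refl :
    cj (reflY : Matrix (Fin 2) (Fin 2) ℝ) '' {M1, M2, M3} = {M1, M2, M3} := by
  have h1 : (reflY : Matrix (Fin 2) (Fin 2) ℝ) * M1 * (reflY : Matrix (Fin 2) (Fin 2) ℝ)ᵀ = M1 := by
    show !![(-1 : ℝ), 0; 0, 1] * M1 * (!![(-1 : ℝ), 0; 0, 1])ᵀ = M1
    rw [transpose_fin_two', M1, Matrix.mul_fin_two, Matrix.mul_fin_two]
    ext i j
    fin_cases i <;> fin_cases j <;> simp
  have h2 : (reflY : Matrix (Fin 2) (Fin 2) ℝ) * M2 * (reflY : Matrix (Fin 2) (Fin 2) ℝ)ᵀ = M3 := by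
    show !![(-1 : ℝ), 0; 0, 1] * M2 * (!![(-1 : ℝ), 0; 0, 1])ᵀ = M3
    rw [transpose_fin_two', M2, M3, Matrix.mul_fin_two, Matrix.mul_fin_two]
    ext i j
    fin_cases i <;> fin_cases j <;> simp <;> ring
  have h3 : (reflY : Matrix (Fin 2) (Fin 2) ℝ) * M3 * (reflY : Matrix (Fin 2) (Fin 2) ℝ)ᵀ = M2 := by
    show !![(-1 : ℝ), 0; 0, 1] * M3 * (!![(-1 : ℝ), 0; 0, 1])ᵀ = M2
    rw [transpose_fin_two', M2, M3, Matrix.mul_fin_two, Matrix.mul_fin_two]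
    ext i j
    fin_cases i <;> fin_cases j <;> simp <;> ring
  rw [cj_image, h1, h2, h3]
  ext x
  simp only [Set.mem_insert_iff, Set.mem_singleton_iff]
  tauto

private lemma C6v_conj (P : Matrix.orthogonalGroup (Fin 2) ℝ) (hP : P ∈ C6v) :
    cj (P : Matrix (Fin 2) (Fin 2) ℝ) '' {M1, M2, M3} = {M1, M2, M3} := by
  induction hP using Subgroup.closure_induction with
  | mem x hx =>
    rcases hx with rfl | rfl
    · exact conj_rot
    · exact conj_refl
  | one => simp [cj_one]
  | mul x y hx hy ihx ihy =>
    have : ((x * y : Matrix.orthogonalGroup (Fin 2) ℝ) : Matrix (Fin 2) (Fin 2) ℝ)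
        = (x : Matrix (Fin 2) (Fin 2) ℝ) * (y : Matrix (Fin 2) (Fin 2) ℝ) := rfl
    rw [this, cj_comp, Set.image_comp, ihy, ihx]
  | inv x hx ihx =>
    have hco : ((x⁻¹ : Matrix.orthogonalGroup (Fin 2) ℝ) : Matrix (Fin 2) (Fin 2) ℝ)
        = (x : Matrix (Fin 2) (Fin 2) ℝ)ᵀ := rfl
    have hxo : (x : Matrix (Fin 2) (Fin 2) ℝ)ᵀ * x = 1 := by
      have := x.2
      rw [Matrix.mem_orthogonalGroup_iff] at this
      exact mul_eq_one_comm.mp this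
    rw [hco]
    conv_lhs => rw [← ihx, ← Set.image_comp, ← cj_comp, hxo, cj_one, Set.image_id]

private lemma coe_one' : ((1 : Matrix.orthogonalGroup (Fin 2) ℝ) : Matrix (Fin 2) (Fin 2) ℝ)
    = !![1, 0; 0, 1] := by
  ext i j; fin_cases i <;> fin_cases j <;> simp [Matrix.one_apply]

private lemma coe_R1 : ((rotPiOver3 : Matrix.orthogonalGroup (Fin 2) ℝ) : Matrix (Fin 2) (Fin 2) ℝ)
    = !![1 / 2, -(√3 / 2); √3 / 2, 1 / 2] := rfl

private lemma coe_F : ((reflY : Matrix.orthogonalGroup (Fin 2) ℝ) : Matrix (Fin 2) (Fin 2) ℝ)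
    = !![-1, 0; 0, 1] := rfl

private lemma coe_R2 : ((rotPiOver3 ^ 2 : Matrix.orthogonalGroup (Fin 2) ℝ) : Matrix (Fin 2) (Fin 2) ℝ)
    = !![-(1 / 2), -(√3 / 2); √3 / 2, -(1 / 2)] := by
  show ((rotPiOver3 : Matrix (Fin 2) (Fin 2) ℝ)) ^ 2 = _
  rw [pow_two, coe_R1, Matrix.mul_fin_two]
  ext i j
  fin_cases i <;> fin_cases j <;> simp <;> linarith [sqrt3_sq, sqrt3_cube]

private lemma coe_R3 : ((rotPiOver3 ^ 3 : Matrix.orthogonalGroup (Fin 2) ℝ) : Matrix (Fin 2) (Fin 2) ℝ)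
    = !![-1, 0; 0, -1] := by
  show ((rotPiOver3 : Matrix (Fin 2) (Fin 2) ℝ)) ^ 3 = _
  have h2 : ((rotPiOver3 : Matrix (Fin 2) (Fin 2) ℝ)) ^ 2
      = !![-(1 / 2), -(√3 / 2); √3 / 2, -(1 / 2)] := coe_R2
  rw [pow_succ, h2, coe_R1, Matrix.mul_fin_two]
  ext i j
  fin_cases i <;> fin_cases j <;> simp <;> linarith [sqrt3_sq, sqrt3_cube]

private lemma coe_R4 : ((rotPiOver3 ^ 4 : Matrix.orthogonalGroup (Fin 2) ℝ) : Matrix (Fin 2) (Fin 2) ℝ)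
    = !![-(1 / 2), √3 / 2; -(√3 / 2), -(1 / 2)] := by
  show ((rotPiOver3 : Matrix (Fin 2) (Fin 2) ℝ)) ^ 4 = _
  have h2 : ((rotPiOver3 : Matrix (Fin 2) (Fin 2) ℝ)) ^ 3
      = !![-1, 0; 0, -1] := coe_R3
  rw [pow_succ, h2, coe_R1, Matrix.mul_fin_two]
  ext i j
  fin_cases i <;> fin_cases j <;> simp <;> linarith [sqrt3_sq, sqrt3_cube]

private lemma coe_R5 : ((rotPiOver3 ^ 5 : Matrix.orthogonalGroup (Fin 2) ℝ) : Matrix (Fin 2) (Fin 2) ℝ)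
    = !![1 / 2, √3 / 2; -(√3 / 2), 1 / 2] := by
  show ((rotPiOver3 : Matrix (Fin 2) (Fin 2) ℝ)) ^ 5 = _
  have h2 : ((rotPiOver3 : Matrix (Fin 2) (Fin 2) ℝ)) ^ 4
      = !![-(1 / 2), √3 / 2; -(√3 / 2), -(1 / 2)] := coe_R4
  rw [pow_succ, h2, coe_R1, Matrix.mul_fin_two]
  ext i j
  fin_cases i <;> fin_cases j <;> simp <;> linarith [sqrt3_sq, sqrt3_cube]

private lemma coe_RF (k : ℕ) (A : Matrix (Fin 2) (Fin 2) ℝ)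
    (h : ((rotPiOver3 ^ k : Matrix.orthogonalGroup (Fin 2) ℝ) : Matrix (Fin 2) (Fin 2) ℝ) = A) :
    ((rotPiOver3 ^ k * reflY : Matrix.orthogonalGroup (Fin 2) ℝ) : Matrix (Fin 2) (Fin 2) ℝ)
      = A * !![-1, 0; 0, 1] := by
  show ((rotPiOver3 ^ k : Matrix.orthogonalGroup (Fin 2) ℝ) : Matrix (Fin 2) (Fin 2) ℝ)
      * ((reflY : Matrix.orthogonalGroup (Fin 2) ℝ) : Matrix (Fin 2) (Fin 2) ℝ) = _
  rw [h, coe_F]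

private lemma rot_mem : rotPiOver3 ∈ C6v :=
  Subgroup.subset_closure (Set.mem_insert _ _)

private lemma refl_mem : reflY ∈ C6v :=
  Subgroup.subset_closure (Set.mem_insert_of_mem _ rfl)

end Aux

/-- For `Q ∈ O(2)`, conjugation by `Q` permutes the set `{M1, M2, M3}` iff `Q`
belongs to the dihedral group of order 12 generated by `R_{π/3}` and the reflection
`[[-1,0],[0,1]]`: the structural tensor set `{M1, M2, M3}` characterizes `C6v`. -/
theorem stmt_7 (Q : Matrix (Fin 2) (Fin 2) ℝ) (hQ : Q * Qᵀ = 1) :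
    ({Q * M1 * Qᵀ, Q * M2 * Qᵀ, Q * M3 * Qᵀ} : Set (Matrix (Fin 2) (Fin 2) ℝ)) =
        {M1, M2, M3} ↔
    ∃ P ∈ C6v, (P : Matrix (Fin 2) (Fin 2) ℝ) = Q := by
  constructor
  · intro h
    have o1 : Q 0 0 * Q 0 0 + Q 0 1 * Q 0 1 = 1 := by
      have := congrFun (congrFun hQ 0) 0
      simpa [Matrix.mul_apply, Fin.sum_univ_two, Matrix.one_apply] using this
    have o2 : Q 0 0 * Q 1 0 + Q 0 1 * Q 1 1 = 0 := by
      have := congrFun (congrFun hQ 0) 1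
      simpa [Matrix.mul_apply, Fin.sum_univ_two, Matrix.one_apply] using this
    have o3 : Q 1 0 * Q 1 0 + Q 1 1 * Q 1 1 = 1 := by
      have := congrFun (congrFun hQ 1) 1
      simpa [Matrix.mul_apply, Fin.sum_univ_two, Matrix.one_apply] using this
    have hm : Q * M1 * Qᵀ ∈ ({M1, M2, M3} : Set (Matrix (Fin 2) (Fin 2) ℝ)) := by
      rw [← h]; exact Set.mem_insert _ _
    simp only [Set.mem_insert_iff, Set.mem_singleton_iff] at hm
    rcases hm with e | e | e
    · -- Q M1 Qᵀ = M1 : b = 0, d = ±1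
      have E00 : Q 0 1 * Q 0 1 = 0 := by
        have := congrFun (congrFun e 0) 0
        simpa [M1, Matrix.mul_apply, Fin.sum_univ_two] using this
      have E11 : Q 1 1 * Q 1 1 = 1 := by
        have := congrFun (congrFun e 1) 1
        simpa [M1, Matrix.mul_apply, Fin.sum_univ_two] using this
      have hb : Q 0 1 = 0 := by nlinarith [E00]
      have hc : Q 1 0 = 0 := by nlinarith [o3, E11]
      have hd : Q 1 1 = 1 ∨ Q 1 1 = -1 := by
        rcases mul_eq_zero.mp (show (Q 1 1 - 1) * (Q 1 1 + 1) = 0 by nlinarith [E11]) with h' | h'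
        · left; linarith
        · right; linarith
      have ha : Q 0 0 = 1 ∨ Q 0 0 = -1 := by
        rcases mul_eq_zero.mp (show (Q 0 0 - 1) * (Q 0 0 + 1) = 0 by nlinarith [o1, E00]) with h' | h'
        · left; linarith
        · right; linarith
      rcases ha with ha | ha <;> rcases hd with hd | hd
      · exact ⟨1, one_mem _, by rw [coe_one', Matrix.eta_fin_two Q, ha, hb, hc, hd]⟩
      · exact ⟨rotPiOver3 ^ 3 * reflY, mul_mem (pow_mem rot_mem 3) refl_mem, by
          rw [coe_RF 3 _ coe_R3, Matrix.mul_fin_two, Matrix.eta_fin_two Q, ha, hb, hc, hd]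
          norm_num⟩
      · exact ⟨reflY, refl_mem, by rw [coe_F, Matrix.eta_fin_two Q, ha, hb, hc, hd]⟩
      · exact ⟨rotPiOver3 ^ 3, pow_mem rot_mem 3, by
          rw [coe_R3, Matrix.eta_fin_two Q, ha, hb, hc, hd]⟩
    · -- Q M1 Qᵀ = M2 : (b,d) = ±(√3/2, -1/2)
      have E00 : Q 0 1 * Q 0 1 = 3 / 4 := by
        have := congrFun (congrFun e 0) 0
        simpa [M1, M2, Matrix.mul_apply, Fin.sum_univ_two] using this
      have E01 : Q 0 1 * Q 1 1 = -(Real.sqrt 3 / 4) := by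
        have := congrFun (congrFun e 0) 1
        simpa [M1, M2, Matrix.mul_apply, Fin.sum_univ_two] using this
      have hb : Q 0 1 = Real.sqrt 3 / 2 ∨ Q 0 1 = -(Real.sqrt 3 / 2) := by
        rcases mul_eq_zero.mp (show (Q 0 1 - Real.sqrt 3 / 2) * (Q 0 1 + Real.sqrt 3 / 2) = 0 by
          nlinarith [E00, sqrt3_sq]) with h' | h'
        · left; linarith
        · right; linarith
      have ha : Q 0 0 = 1 / 2 ∨ Q 0 0 = -(1 / 2) := by
        rcases mul_eq_zero.mp (show (Q 0 0 - 1 / 2) * (Q 0 0 + 1 / 2) = 0 by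
          nlinarith [o1, E00]) with h' | h'
        · left; linarith
        · right; linarith
      rcases hb with hb | hb
      · have hd : Q 1 1 = -(1 / 2) := by
          rcases mul_eq_zero.mp (show Real.sqrt 3 * (Q 1 1 + 1 / 2) = 0 by
            rw [hb] at E01; linarith) with h' | h'
          · exact absurd h' sqrt3_ne
          · linarith
        rcases ha with ha | ha
        · have hc : Q 1 0 = Real.sqrt 3 / 2 := by
            rw [ha, hb, hd] at o2; linarith
          exact ⟨rotPiOver3 ^ 4 * reflY, mul_mem (pow_mem rot_mem 4) refl_mem, by
            rw [coe_RF 4 _ coe_R4, Matrix.mul_fin_two, Matrix.eta_fin_two Q, ha, hb, hc, hd]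
            norm_num⟩
        · have hc : Q 1 0 = -(Real.sqrt 3 / 2) := by
            rw [ha, hb, hd] at o2; linarith
          exact ⟨rotPiOver3 ^ 4, pow_mem rot_mem 4, by
            rw [coe_R4, Matrix.eta_fin_two Q, ha, hb, hc, hd]⟩
      · have hd : Q 1 1 = 1 / 2 := by
          rcases mul_eq_zero.mp (show Real.sqrt 3 * (Q 1 1 - 1 / 2) = 0 by
            rw [hb] at E01; linarith) with h' | h'
          · exact absurd h' sqrt3_ne
          · linarith
        rcases ha with ha | ha
        · have hc : Q 1 0 = Real.sqrt 3 / 2 := by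
            rw [ha, hb, hd] at o2; linarith
          exact ⟨rotPiOver3, rot_mem, by
            rw [coe_R1, Matrix.eta_fin_two Q, ha, hb, hc, hd]⟩
        · have hc : Q 1 0 = -(Real.sqrt 3 / 2) := by
            rw [ha, hb, hd] at o2; linarith
          exact ⟨rotPiOver3 ^ 1 * reflY, mul_mem (pow_mem rot_mem 1) refl_mem, by
            rw [coe_RF 1 !![1 / 2, -(Real.sqrt 3 / 2); Real.sqrt 3 / 2, 1 / 2] (by rw [pow_one, coe_R1]),
              Matrix.mul_fin_two, Matrix.eta_fin_two Q, ha, hb, hc, hd]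
            norm_num⟩
    · -- Q M1 Qᵀ = M3 : (b,d) = ±(√3/2, 1/2)
      have E00 : Q 0 1 * Q 0 1 = 3 / 4 := by
        have := congrFun (congrFun e 0) 0
        simpa [M1, M3, Matrix.mul_apply, Fin.sum_univ_two] using this
      have E01 : Q 0 1 * Q 1 1 = Real.sqrt 3 / 4 := by
        have := congrFun (congrFun e 0) 1
        simpa [M1, M3, Matrix.mul_apply, Fin.sum_univ_two] using this
      have hb : Q 0 1 = Real.sqrt 3 / 2 ∨ Q 0 1 = -(Real.sqrt 3 / 2) := by
        rcases mul_eq_zero.mp (show (Q 0 1 - Real.sqrt 3 / 2) * (Q 0 1 + Real.sqrt 3 / 2) = 0 by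
          nlinarith [E00, sqrt3_sq]) with h' | h'
        · left; linarith
        · right; linarith
      have ha : Q 0 0 = 1 / 2 ∨ Q 0 0 = -(1 / 2) := by
        rcases mul_eq_zero.mp (show (Q 0 0 - 1 / 2) * (Q 0 0 + 1 / 2) = 0 by
          nlinarith [o1, E00]) with h' | h'
        · left; linarith
        · right; linarith
      rcases hb with hb | hb
      · have hd : Q 1 1 = 1 / 2 := by
          rcases mul_eq_zero.mp (show Real.sqrt 3 * (Q 1 1 - 1 / 2) = 0 by
            rw [hb] at E01; linarith) with h' | h'
          · exact absurd h' sqrt3_ne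
          · linarith
        rcases ha with ha | ha
        · have hc : Q 1 0 = -(Real.sqrt 3 / 2) := by
            rw [ha, hb, hd] at o2; linarith
          exact ⟨rotPiOver3 ^ 5, pow_mem rot_mem 5, by
            rw [coe_R5, Matrix.eta_fin_two Q, ha, hb, hc, hd]⟩
        · have hc : Q 1 0 = Real.sqrt 3 / 2 := by
            rw [ha, hb, hd] at o2; linarith
          exact ⟨rotPiOver3 ^ 5 * reflY, mul_mem (pow_mem rot_mem 5) refl_mem, by
            rw [coe_RF 5 _ coe_R5, Matrix.mul_fin_two, Matrix.eta_fin_two Q, ha, hb, hc, hd]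
            norm_num⟩
      · have hd : Q 1 1 = -(1 / 2) := by
          rcases mul_eq_zero.mp (show Real.sqrt 3 * (Q 1 1 + 1 / 2) = 0 by
            rw [hb] at E01; linarith) with h' | h'
          · exact absurd h' sqrt3_ne
          · linarith
        rcases ha with ha | ha
        · have hc : Q 1 0 = -(Real.sqrt 3 / 2) := by
            rw [ha, hb, hd] at o2; linarith
          exact ⟨rotPiOver3 ^ 2 * reflY, mul_mem (pow_mem rot_mem 2) refl_mem, by
            rw [coe_RF 2 _ coe_R2, Matrix.mul_fin_two, Matrix.eta_fin_two Q, ha, hb, hc, hd]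
            norm_num⟩
        · have hc : Q 1 0 = Real.sqrt 3 / 2 := by
            rw [ha, hb, hd] at o2; linarith
          exact ⟨rotPiOver3 ^ 2, pow_mem rot_mem 2, by
            rw [coe_R2, Matrix.eta_fin_two Q, ha, hb, hc, hd]⟩
  · rintro ⟨P, hP, rfl⟩
    rw [← cj_image]
    exact C6v_conj P hP
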